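/- arXiv:1611.07609 — 7 statements merged into one kernel-verified Lean document; each statement's English description precedes it below -/
import Mathlib

section
/- Let f : ℝ^d → ℝ be convex and L-smooth (‖∇f(x) − ∇f(y)‖ ≤ L‖x − y‖), with minimum value f_* attained on a nonempty set Ω_*. Suppose f satisfies the Hölderian error bound dist(x, Ω_*) ≤ c (f(x) − f_*)^θ for all x in the sublevel set S_ξ = {x : f(x) − f_* ≤ ξ}, with θ ∈ (0,1) and c > 0. Then for all x ∈ S_ξ, dist(x, Ω_*) ≤ c^{1/(1−θ)} ‖∇f(x)‖^{θ/(1−θ)}. -/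
/-! Write `D = dist(x, Ω_*)` and `a = f(x) - f_*`. Convexity gives `f(x) - f(z) ≤ ⟪∇f(x), x - z⟫`
for every minimiser `z`, hence `a ≤ ‖∇f(x)‖ D` by Cauchy–Schwarz. Combined with the error bound
`D ≤ c a^θ` this yields `D ≤ c ‖∇f(x)‖^θ D^θ`, and dividing by `D^θ` and raising to the power
`1 / (1 - θ)` gives the claim. -/

open Set

theorem ConvexOn.apply_sub_le_of_hasFDerivAt {E : Type*} [NormedAddCommGroup E] [NormedSpace ℝ E]
    {s : Set E} {f : E → ℝ} {f' : E →L[ℝ] ℝ} {x y : E} (hf : ConvexOn ℝ s f)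
    (hx : x ∈ s) (hy : y ∈ s) (hf' : HasFDerivAt f f' x) :
    f' (y - x) ≤ f y - f x := by
  set φ : ℝ →ᵃ[ℝ] E := AffineMap.lineMap x y
  have hline : ConvexOn ℝ (φ ⁻¹' s) (f ∘ φ) := hf.comp_affineMap φ
  have hderiv : HasDerivAt (f ∘ φ) (f' (y - x)) 0 :=
    (AffineMap.lineMap_apply_zero (k := ℝ) x y ▸ hf').comp_hasDerivAt 0
      AffineMap.hasDerivAt_lineMap
  simpa [φ, slope_def_field] using
    hline.le_slope_of_hasDerivAt (by simpa [φ] using hx) (by simpa [φ] using hy) one_pos hderiv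

theorem ConvexOn.inner_sub_le_of_hasGradientAt {F : Type*} [NormedAddCommGroup F]
    [InnerProductSpace ℝ F] [CompleteSpace F] {s : Set F} {f : F → ℝ} {g x y : F}
    (hf : ConvexOn ℝ s f) (hx : x ∈ s) (hy : y ∈ s) (hg : HasGradientAt f g x) :
    inner ℝ g (y - x) ≤ f y - f x := by
  simpa using hf.apply_sub_le_of_hasFDerivAt hx hy (hasGradientAt_iff_hasFDerivAt.mp hg)

theorem ConvexOn.sub_le_norm_mul_dist_of_hasGradientAt {F : Type*} [NormedAddCommGroup F]
    [InnerProductSpace ℝ F] [CompleteSpace F] {s : Set F} {f : F → ℝ} {g x y : F}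
    (hf : ConvexOn ℝ s f) (hx : x ∈ s) (hy : y ∈ s) (hg : HasGradientAt f g x) :
    f x - f y ≤ ‖g‖ * dist x y :=
  calc f x - f y ≤ inner ℝ g (x - y) := by
        have := hf.inner_sub_le_of_hasGradientAt hx hy hg
        rw [← neg_sub x y, inner_neg_right] at this
        linarith
    _ ≤ ‖g‖ * dist x y := by rw [dist_eq_norm]; exact real_inner_le_norm g (x - y)

theorem Metric.le_mul_infDist {α : Type*} [PseudoMetricSpace α] {s : Set α} {x : α} {a G : ℝ}
    (hs : s.Nonempty) (hG : 0 ≤ G) (h : ∀ y ∈ s, a ≤ G * dist x y) :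
    a ≤ G * infDist x s := by
  rcases hG.eq_or_lt with rfl | hG
  · obtain ⟨y, hy⟩ := hs
    simpa using h y hy
  · rw [← div_le_iff₀' hG, le_infDist hs]
    intro y hy
    rw [div_le_iff₀' hG]
    exact h y hy

theorem le_rpow_mul_rpow_of_le_mul_rpow_of_le_mul {D a c G θ : ℝ} (hD : 0 ≤ D) (ha : 0 ≤ a)
    (hc : 0 ≤ c) (hG : 0 ≤ G) (hθ₀ : 0 ≤ θ) (hθ₁ : θ < 1)
    (hDa : D ≤ c * a ^ θ) (haD : a ≤ G * D) :
    D ≤ c ^ (1 / (1 - θ)) * G ^ (θ / (1 - θ)) := by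
  rcases hD.eq_or_lt with rfl | hD
  · positivity
  have hθ : 0 < 1 - θ := sub_pos.mpr hθ₁
  have hDθ : 0 < D ^ θ := Real.rpow_pos_of_pos hD θ
  have key : D ^ (1 - θ) ≤ c * G ^ θ := by
    refine le_of_mul_le_mul_right ?_ hDθ
    calc D ^ (1 - θ) * D ^ θ = D := by rw [← Real.rpow_add hD, sub_add_cancel, Real.rpow_one]
      _ ≤ c * a ^ θ := hDa
      _ ≤ c * (G * D) ^ θ := by gcongr
      _ = c * G ^ θ * D ^ θ := by rw [Real.mul_rpow hG hD.le, mul_assoc]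
  calc D ≤ (c * G ^ θ) ^ (1 - θ)⁻¹ :=
        (Real.le_rpow_inv_iff_of_pos hD.le (by positivity) hθ).mpr key
    _ = c ^ (1 / (1 - θ)) * G ^ (θ / (1 - θ)) := by
        rw [Real.mul_rpow hc (by positivity), ← Real.rpow_mul hG, one_div, div_eq_mul_inv]

theorem heb_dist_grad_bound_general {d : ℕ} (c θ ξ : ℝ) (hc : 0 < c)
    (hθ : θ ∈ Set.Ioo (0:ℝ) 1)
    (f : EuclideanSpace ℝ (Fin d) → ℝ)
    (f' : EuclideanSpace ℝ (Fin d) → EuclideanSpace ℝ (Fin d))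
    (hconv : ConvexOn ℝ Set.univ f)
    (hgrad : ∀ x, HasGradientAt f (f' x) x)
    (Ω : Set (EuclideanSpace ℝ (Fin d)))
    (hΩ : Ω = {x | ∀ y, f x ≤ f y}) (hne : Ω.Nonempty)
    (fstar : ℝ) (hfs : ∀ x ∈ Ω, f x = fstar)
    (heb : ∀ x, f x - fstar ≤ ξ → Metric.infDist x Ω ≤ c * (f x - fstar) ^ θ)
    (x : EuclideanSpace ℝ (Fin d)) (hx : f x - fstar ≤ ξ) :
    Metric.infDist x Ω ≤ c ^ (1 / (1 - θ)) * ‖f' x‖ ^ (θ / (1 - θ)) := by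
  have hgap : 0 ≤ f x - fstar := by
    obtain ⟨x₀, hx₀⟩ := hne
    rw [← hfs x₀ hx₀, sub_nonneg]
    rw [hΩ] at hx₀
    exact hx₀ x
  have hgap_le : f x - fstar ≤ ‖f' x‖ * Metric.infDist x Ω := by
    refine Metric.le_mul_infDist hne (norm_nonneg _) fun z hz ↦ ?_
    rw [← hfs z hz]
    exact hconv.sub_le_norm_mul_dist_of_hasGradientAt (mem_univ x) (mem_univ z) (hgrad x)
  exact le_rpow_mul_rpow_of_le_mul_rpow_of_le_mul Metric.infDist_nonneg hgap hc.le
    (norm_nonneg _) hθ.1.le hθ.2 (heb x hx) hgap_le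

theorem heb_dist_grad_bound {d : ℕ} (L c θ ξ : ℝ) (hL : 0 < L) (hc : 0 < c)
    (hθ : θ ∈ Set.Ioo (0:ℝ) 1)
    (f : EuclideanSpace ℝ (Fin d) → ℝ)
    (f' : EuclideanSpace ℝ (Fin d) → EuclideanSpace ℝ (Fin d))
    (hconv : ConvexOn ℝ Set.univ f)
    (hgrad : ∀ x, HasGradientAt f (f' x) x)
    (hlip : ∀ x y, ‖f' x - f' y‖ ≤ L * ‖x - y‖)
    (Ω : Set (EuclideanSpace ℝ (Fin d)))
    (hΩ : Ω = {x | ∀ y, f x ≤ f y}) (hne : Ω.Nonempty)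
    (fstar : ℝ) (hfs : ∀ x ∈ Ω, f x = fstar)
    (heb : ∀ x, f x - fstar ≤ ξ → Metric.infDist x Ω ≤ c * (f x - fstar) ^ θ)
    (x : EuclideanSpace ℝ (Fin d)) (hx : f x - fstar ≤ ξ) :
    Metric.infDist x Ω ≤ c ^ (1 / (1 - θ)) * ‖f' x‖ ^ (θ / (1 - θ)) :=
  heb_dist_grad_bound_general c θ ξ hc hθ f f' hconv hgrad Ω hΩ hne fstar hfs heb x hx
end

section
/- Let f : ℝ^d → ℝ be convex and L-smooth with a minimizer x_*, let δ > 0, x₀ ∈ ℝ^d, and f_δ(x) = f(x) + (δ/2)‖x − x₀‖². Suppose x_{t+1} satisfies f_δ(x_{t+1}) − f_δ(x) ≤ (1 − √(δ/(L+δ)))^t (f(x₀) − f(x)) for all x. If (1 − √(δ/(L+δ)))^t · (L/δ) ≤ 1, then ‖x_{t+1} − x₀‖ ≤ √2 ‖x₀ − x_*‖. -/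
/-!
Since `xstar` is a global minimiser, the gradient vanishes there, and the descent lemma for
an `L`-Lipschitz gradient gives `f x0 - f xstar ≤ L/2 ‖x0 - xstar‖²`. Testing the hypothesis
on the stage iterate against `x = xstar`, and using `f xstar ≤ f xt1`, yields
`δ/2 ‖xt1 - x0‖² ≤ δ/2 ‖x0 - xstar‖² + ρ (f x0 - f xstar)` with `ρ = (1 - √(δ/(L+δ)))^t`,
and `ρ (L / δ) ≤ 1` bounds the last term by `δ/2 ‖x0 - xstar‖²`. Hence `‖xt1 - x0‖² ≤ 2 ‖x0 - xstar‖²`.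
-/

open InnerProductSpace

variable {E : Type*} [NormedAddCommGroup E] [InnerProductSpace ℝ E] [CompleteSpace E]

theorem IsLocalMin.hasGradientAt_eq_zero {f : E → ℝ} {f' : E} {x : E}
    (hmin : IsLocalMin f x) (hf : HasGradientAt f f' x) : f' = 0 :=
  (toDual ℝ E).map_eq_zero_iff.1 (hmin.hasFDerivAt_eq_zero hf.hasFDerivAt)

/-- The descent lemma. -/
theorem sub_le_inner_add_sq_of_lipschitz_gradient {f : E → ℝ} {f' : E → E} {L : ℝ}
    (hgrad : ∀ x, HasGradientAt f (f' x) x) (hlip : ∀ x y, ‖f' x - f' y‖ ≤ L * ‖x - y‖)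
    (x y : E) : f y - f x ≤ ⟪f' x, y - x⟫_ℝ + L / 2 * ‖y - x‖ ^ 2 := by
  set v := y - x
  -- `g` has derivative `⟪f' (x + s v) - f' x, v⟫ - L s ‖v‖² ≤ 0` for `s ≥ 0`.
  set g : ℝ → ℝ := fun s => f (x + s • v) - s * ⟪f' x, v⟫_ℝ - L / 2 * ‖v‖ ^ 2 * s ^ 2
  have hg : ∀ s, HasDerivAt g (⟪f' (x + s • v), v⟫_ℝ - ⟪f' x, v⟫_ℝ
      - L / 2 * ‖v‖ ^ 2 * (2 * s)) s := by
    intro s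
    have hline : HasDerivAt (fun s : ℝ => x + s • v) v s := by
      simpa using ((hasDerivAt_id s).smul_const v).const_add x
    have hquad : HasDerivAt (fun s : ℝ => L / 2 * ‖v‖ ^ 2 * s ^ 2)
        (L / 2 * ‖v‖ ^ 2 * (2 * s)) s := by
      simpa using (hasDerivAt_pow 2 s).const_mul (L / 2 * ‖v‖ ^ 2)
    exact (((hgrad _).hasFDerivAt.comp_hasDerivAt s hline).sub
      ((hasDerivAt_id s).mul_const ⟪f' x, v⟫_ℝ |>.congr_deriv (one_mul _))).sub hquad
  have hanti : AntitoneOn g (Set.Icc 0 1) := by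
    refine antitoneOn_of_deriv_nonpos (convex_Icc 0 1)
      (fun s _ => (hg s).continuousAt.continuousWithinAt)
      (fun s _ => (hg s).differentiableAt.differentiableWithinAt) fun s hs => ?_
    rw [interior_Icc] at hs
    have hinner : ⟪f' (x + s • v) - f' x, v⟫_ℝ ≤ L * s * ‖v‖ ^ 2 :=
      calc ⟪f' (x + s • v) - f' x, v⟫_ℝ
          ≤ ‖f' (x + s • v) - f' x‖ * ‖v‖ := real_inner_le_norm _ _
        _ ≤ L * ‖x + s • v - x‖ * ‖v‖ := by gcongr; exact hlip _ _
        _ = L * s * ‖v‖ ^ 2 := by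
          rw [add_sub_cancel_left, norm_smul, Real.norm_of_nonneg hs.1.le]; ring
    rw [(hg s).deriv, ← inner_sub_left]
    linarith
  have h01 := hanti (Set.left_mem_Icc.2 zero_le_one) (Set.right_mem_Icc.2 zero_le_one)
    zero_le_one
  simp only [g, v, zero_smul, add_zero, one_smul, add_sub_cancel, zero_mul, sub_zero,
    one_mul, one_pow, ne_eq, OfNat.ofNat_ne_zero, not_false_eq_true, zero_pow, mul_zero] at h01
  linarith

theorem sub_min_le_sq_of_lipschitz_gradient {f : E → ℝ} {f' : E → E} {L : ℝ}
    (hgrad : ∀ x, HasGradientAt f (f' x) x) (hlip : ∀ x y, ‖f' x - f' y‖ ≤ L * ‖x - y‖)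
    {xstar : E} (hstar : ∀ y, f xstar ≤ f y) (x : E) :
    f x - f xstar ≤ L / 2 * ‖x - xstar‖ ^ 2 := by
  have hzero : f' xstar = 0 :=
    IsLocalMin.hasGradientAt_eq_zero (Filter.Eventually.of_forall hstar) (hgrad xstar)
  simpa [hzero] using sub_le_inner_add_sq_of_lipschitz_gradient hgrad hlip xstar x

theorem regularized_stage_distance_bound_general {d : ℕ} (L δ : ℝ) (hδ : 0 < δ)
    (f : EuclideanSpace ℝ (Fin d) → ℝ)
    (f' : EuclideanSpace ℝ (Fin d) → EuclideanSpace ℝ (Fin d))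
    (hgrad : ∀ x, HasGradientAt f (f' x) x)
    (hlip : ∀ x y, ‖f' x - f' y‖ ≤ L * ‖x - y‖)
    (xstar : EuclideanSpace ℝ (Fin d)) (hstar : ∀ y, f xstar ≤ f y)
    (x0 xt1 : EuclideanSpace ℝ (Fin d)) (t : ℕ)
    (hyp : ∀ x, (f xt1 + δ / 2 * ‖xt1 - x0‖ ^ 2) - (f x + δ / 2 * ‖x - x0‖ ^ 2)
        ≤ (1 - Real.sqrt (δ / (L + δ))) ^ t * (f x0 - f x))
    (hcond : (1 - Real.sqrt (δ / (L + δ))) ^ t * (L / δ) ≤ 1) :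
    ‖xt1 - x0‖ ≤ Real.sqrt 2 * ‖x0 - xstar‖ := by
  set ρ := (1 - Real.sqrt (δ / (L + δ))) ^ t
  set r := ‖x0 - xstar‖
  have hgap : f x0 - f xstar ≤ L / 2 * r ^ 2 :=
    sub_min_le_sq_of_lipschitz_gradient hgrad hlip hstar x0
  have hρgap : ρ * (f x0 - f xstar) ≤ δ / 2 * r ^ 2 := by
    rcases le_or_gt 0 ρ with hρ | hρ
    · calc ρ * (f x0 - f xstar) ≤ ρ * (L / 2 * r ^ 2) := by gcongr
        _ = ρ * (L / δ) * (δ / 2 * r ^ 2) := by field_simp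
        _ ≤ δ / 2 * r ^ 2 := mul_le_of_le_one_left (by positivity) hcond
    · nlinarith [hstar x0]
  have hsq : ‖xt1 - x0‖ ^ 2 ≤ (Real.sqrt 2 * r) ^ 2 := by
    have := hyp xstar
    rw [norm_sub_rev xstar] at this
    rw [mul_pow, Real.sq_sqrt zero_le_two]
    nlinarith [hstar xt1]
  exact (pow_le_pow_iff_left₀ (norm_nonneg _) (by positivity) two_ne_zero).1 hsq

theorem regularized_stage_distance_bound {d : ℕ} (L δ : ℝ) (hL : 0 < L) (hδ : 0 < δ)
    (f : EuclideanSpace ℝ (Fin d) → ℝ)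
    (f' : EuclideanSpace ℝ (Fin d) → EuclideanSpace ℝ (Fin d))
    (hconv : ConvexOn ℝ Set.univ f)
    (hgrad : ∀ x, HasGradientAt f (f' x) x)
    (hlip : ∀ x y, ‖f' x - f' y‖ ≤ L * ‖x - y‖)
    (xstar : EuclideanSpace ℝ (Fin d)) (hstar : ∀ y, f xstar ≤ f y)
    (x0 xt1 : EuclideanSpace ℝ (Fin d)) (t : ℕ)
    (hyp : ∀ x, (f xt1 + δ / 2 * ‖xt1 - x0‖ ^ 2) - (f x + δ / 2 * ‖x - x0‖ ^ 2)
        ≤ (1 - Real.sqrt (δ / (L + δ))) ^ t * (f x0 - f x))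
    (hcond : (1 - Real.sqrt (δ / (L + δ))) ^ t * (L / δ) ≤ 1) :
    ‖xt1 - x0‖ ≤ Real.sqrt 2 * ‖x0 - xstar‖ :=
  regularized_stage_distance_bound_general L δ hδ f f' hgrad hlip xstar hstar x0 xt1 t hyp hcond
end

section
/- Let f : ℝ^d → ℝ be convex and L-smooth, g proper convex lsc, F = f + g, η ∈ (0, 1/L]. For all x, y: F(prox_{ηg}(y − η∇f(y))) ≤ F(x) + ⟨G_η(y), y − x⟩ − (η/2)‖G_η(y)‖², where G_η(y) = (y − prox_{ηg}(y − η∇f(y)))/η. -/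
/-!
Three inequalities are added up: the gradient inequality `f y + ⟪∇f y, x - y⟫ ≤ f x` for the
convex `f`, the descent lemma `f p ≤ f y + ⟪∇f y, p - y⟫ + L/2 ‖p - y‖²` for the `L`-smooth `f`
(where `L η ≤ 1` turns `L/2` into `1/(2η)`), and the variational inequality
`⟪u - p, x - p⟫ ≤ η (g x - g p)` characterising `p = prox_{ηg} u`, which comes from comparing `p`
with `p + t (x - p)` and letting `t → 0⁺`. Written in terms of `G = (y - p)/η`, their sum is the
claim.
-/

open Set Filter Topology
open scoped RealInnerProductSpace

variable {E : Type*} [NormedAddCommGroup E] [InnerProductSpace ℝ E]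

section Gradient

variable [CompleteSpace E] {f : E → ℝ}

theorem HasGradientAt.hasDerivAt_add_smul {g y v : E} {t : ℝ}
    (h : HasGradientAt f g (y + t • v)) :
    HasDerivAt (fun s : ℝ => f (y + s • v)) ⟪g, v⟫ t := by
  have hline : HasDerivAt (fun s : ℝ => y + s • v) v t := by
    simpa using ((hasDerivAt_id t).smul_const v).const_add y
  simpa [InnerProductSpace.toDual_apply_apply, Function.comp_def] using
    h.hasFDerivAt.comp_hasDerivAt t hline

theorem ConvexOn.add_inner_le_of_hasGradientAt (hf : ConvexOn ℝ univ f) {g y : E}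
    (hg : HasGradientAt f g y) (x : E) : f y + ⟪g, x - y⟫ ≤ f x := by
  have hline : (fun s : ℝ => f (y + s • (x - y))) = f ∘ AffineMap.lineMap y x := by
    ext s
    simp [AffineMap.lineMap_apply, add_comm]
  have hconv : ConvexOn ℝ univ (fun s : ℝ => f (y + s • (x - y))) := by
    simpa [hline] using hf.comp_affineMap (AffineMap.lineMap y x)
  have hderiv : HasDerivAt (fun s : ℝ => f (y + s • (x - y))) ⟪g, x - y⟫ 0 :=
    HasGradientAt.hasDerivAt_add_smul (by simpa using hg)
  have := hconv.le_slope_of_hasDerivAt (mem_univ 0) (mem_univ 1) one_pos hderiv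
  simp only [slope_def_field, one_smul, add_sub_cancel, zero_smul, add_zero, sub_zero, div_one]
    at this
  linarith

theorem le_add_inner_add_sq_of_lipschitz_gradient {f' : E → E} {L : ℝ}
    (hgrad : ∀ x, HasGradientAt f (f' x) x) (hlip : ∀ x y, ‖f' x - f' y‖ ≤ L * ‖x - y‖)
    (x y : E) : f x ≤ f y + ⟪f' y, x - y⟫ + L / 2 * ‖x - y‖ ^ 2 := by
  set v := x - y
  have hφ : ∀ t, HasDerivAt (fun s : ℝ => f (y + s • v)) ⟪f' (y + t • v), v⟫ t :=
    fun t => (hgrad _).hasDerivAt_add_smul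
  have hB : ∀ t, HasDerivAt (fun s : ℝ => f y + s * ⟪f' y, v⟫ + L / 2 * s ^ 2 * ‖v‖ ^ 2)
      (⟪f' y, v⟫ + L * t * ‖v‖ ^ 2) t := by
    intro t
    refine ((((hasDerivAt_id t).mul_const ⟪f' y, v⟫).const_add (f y)).add
      (((hasDerivAt_pow 2 t).const_mul (L / 2)).mul_const (‖v‖ ^ 2))).congr_deriv ?_
    simp only [Nat.cast_ofNat]
    ring
  have hbound : ∀ t ∈ Ico (0 : ℝ) 1, ⟪f' (y + t • v), v⟫ ≤ ⟪f' y, v⟫ + L * t * ‖v‖ ^ 2 := by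
    rintro t ⟨ht, -⟩
    have hcs : ⟪f' (y + t • v) - f' y, v⟫ ≤ ‖f' (y + t • v) - f' y‖ * ‖v‖ :=
      real_inner_le_norm _ _
    have hl : ‖f' (y + t • v) - f' y‖ ≤ L * (t * ‖v‖) := by
      simpa [norm_smul, abs_of_nonneg ht] using hlip (y + t • v) y
    rw [inner_sub_left] at hcs
    nlinarith [mul_le_mul_of_nonneg_right hl (norm_nonneg v)]
  have := image_le_of_deriv_right_le_deriv_boundary
    (fun t _ => (hφ t).continuousAt.continuousWithinAt) (fun t _ => (hφ t).hasDerivWithinAt)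
    (by simp) (fun t _ => (hB t).continuousAt.continuousWithinAt)
    (fun t _ => (hB t).hasDerivWithinAt) hbound (right_mem_Icc.2 zero_le_one)
  simpa [v] using this

end Gradient

theorem ConvexOn.inner_sub_le_sub_of_prox_min {h : E → ℝ} (hh : ConvexOn ℝ univ h) {u p : E}
    (hp : ∀ z, 1 / 2 * ‖p - u‖ ^ 2 + h p ≤ 1 / 2 * ‖z - u‖ ^ 2 + h z) (x : E) :
    ⟪u - p, x - p⟫ ≤ h x - h p := by
  set b := ⟪p - u, x - p⟫ + (h x - h p)
  set c := ‖x - p‖ ^ 2 / 2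
  have hsegment : ∀ t ∈ Ioc (0 : ℝ) 1, 0 ≤ b + t * c := by
    rintro t ⟨ht0, ht1⟩
    have hz := hp (p + t • (x - p))
    have hnorm : ‖p + t • (x - p) - u‖ ^ 2
        = ‖p - u‖ ^ 2 + 2 * (t * ⟪p - u, x - p⟫) + t ^ 2 * ‖x - p‖ ^ 2 := by
      rw [show p + t • (x - p) - u = (p - u) + t • (x - p) by abel, norm_add_sq_real,
        real_inner_smul_right, norm_smul, Real.norm_eq_abs, abs_of_pos ht0]
      ring
    have hconv : h (p + t • (x - p)) ≤ (1 - t) * h p + t * h x := by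
      rw [show p + t • (x - p) = (1 - t) • p + t • x by module]
      exact hh.2 (mem_univ p) (mem_univ x) (by linarith) ht0.le (by ring)
    rw [hnorm] at hz
    have : 0 ≤ t * (b + t * c) := by simp only [b, c]; nlinarith
    exact nonneg_of_mul_nonneg_right (by linarith) ht0
  have hlim : Tendsto (fun t => b + t * c) (𝓝[>] 0) (𝓝 b) := by
    have hcont : Continuous (fun t : ℝ => b + t * c) := by fun_prop
    simpa using (hcont.tendsto 0).mono_left nhdsWithin_le_nhds
  have := ge_of_tendsto hlim (eventually_of_mem (Ioc_mem_nhdsGT one_pos) hsegment)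
  rw [← neg_sub p u, inner_neg_left]
  linarith

theorem prox_grad_descent_lemma_general {d : ℕ} (L η : ℝ) (hL : 0 < L)
    (hη : 0 < η) (hηL : η ≤ 1 / L)
    (f g : EuclideanSpace ℝ (Fin d) → ℝ)
    (f' : EuclideanSpace ℝ (Fin d) → EuclideanSpace ℝ (Fin d))
    (hconvf : ConvexOn ℝ Set.univ f)
    (hgrad : ∀ x, HasGradientAt f (f' x) x)
    (hlip : ∀ x y, ‖f' x - f' y‖ ≤ L * ‖x - y‖)
    (hconvg : ConvexOn ℝ Set.univ g)
    (y p : EuclideanSpace ℝ (Fin d))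
    (hp : ∀ z, 1 / 2 * ‖p - (y - η • f' y)‖ ^ 2 + η * g p
        ≤ 1 / 2 * ‖z - (y - η • f' y)‖ ^ 2 + η * g z) :
    ∀ x, f p + g p ≤ f x + g x + (inner ℝ ((1 / η) • (y - p)) (y - x) : ℝ)
        - η / 2 * ‖(1 / η) • (y - p)‖ ^ 2 := by
  intro x
  set G := (1 / η) • (y - p)
  have hp_eq : p = y - η • G := by simp [G, smul_smul, hη.ne']
  have hconvex := hconvf.add_inner_le_of_hasGradientAt (hgrad y) x
  have hdescent := le_add_inner_add_sq_of_lipschitz_gradient hgrad hlip p y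
  have hprox := (hconvg.smul hη.le).inner_sub_le_sub_of_prox_min hp x
  rw [show p - y = -(η • G) by rw [hp_eq]; abel] at hdescent
  rw [show y - η • f' y - p = η • (G - f' y) by rw [hp_eq]; module,
    show x - p = (x - y) + η • G by rw [hp_eq]; abel] at hprox
  simp only [inner_neg_right, real_inner_smul_left, inner_smul_right, inner_sub_left,
    inner_sub_right, inner_add_right, norm_neg, norm_smul, Real.norm_eq_abs, abs_of_pos hη,
    real_inner_self_eq_norm_sq] at hconvex hdescent hprox ⊢
  have hLη : L * η ≤ 1 := by rwa [le_div_iff₀ hL, mul_comm] at hηL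
  have hstep : L / 2 * (η * ‖G‖) ^ 2 ≤ η / 2 * ‖G‖ ^ 2 := by
    linarith [mul_le_mul_of_nonneg_right hLη (by positivity : 0 ≤ η * ‖G‖ ^ 2)]
  refine le_of_mul_le_mul_left ?_ hη
  linear_combination η * hconvex + η * hdescent + hprox + η * hstep

theorem prox_grad_descent_lemma {d : ℕ} (L η : ℝ) (hL : 0 < L)
    (hη : 0 < η) (hηL : η ≤ 1 / L)
    (f g : EuclideanSpace ℝ (Fin d) → ℝ)
    (f' : EuclideanSpace ℝ (Fin d) → EuclideanSpace ℝ (Fin d))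
    (hconvf : ConvexOn ℝ Set.univ f)
    (hgrad : ∀ x, HasGradientAt f (f' x) x)
    (hlip : ∀ x y, ‖f' x - f' y‖ ≤ L * ‖x - y‖)
    (hconvg : ConvexOn ℝ Set.univ g) (hlsc : LowerSemicontinuous g)
    (y p : EuclideanSpace ℝ (Fin d))
    (hp : ∀ z, 1 / 2 * ‖p - (y - η • f' y)‖ ^ 2 + η * g p
        ≤ 1 / 2 * ‖z - (y - η • f' y)‖ ^ 2 + η * g z) :
    ∀ x, f p + g p ≤ f x + g x + (inner ℝ ((1 / η) • (y - p)) (y - x) : ℝ)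
        - η / 2 * ‖(1 / η) • (y - p)‖ ^ 2 :=
  prox_grad_descent_lemma_general L η hL hη hηL f g f' hconvf hgrad hlip hconvg y p hp
end

section
/- Let F = f + g with f convex L-smooth and g proper convex lsc, with F_* = min F attained on Ω_*. Suppose F satisfies the HEB with θ ∈ (0, 1/2] on the ξ-sublevel set: dist(x, Ω_*) ≤ c(F(x) − F_*)^θ for x ∈ S_ξ. Then for all x ∈ S_ξ, dist(x, Ω_*) ≤ (2/L)‖G(x)‖ + c^{1/(1−θ)} 2^{θ/(1−θ)} ‖G(x)‖^{θ/(1−θ)}, where G(x) = L(x − prox_{g/L}(x − ∇f(x)/L)). -/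
/-!
Write `p` for the proximal-gradient point of `x` and `G = L • (x - p)`. Optimality of `p` in the
proximal subproblem makes `f' p - f' x + G` a subgradient of `F = f + g` at `p`, and by the
Lipschitz bound its norm is at most `2 ‖G‖`. Its inner product with `p - x` is nonpositive, so
`F p ≤ F x` and `p` stays in the sublevel set; against every minimizer it gives
`F p - F_* ≤ 2 ‖G‖ dist(p, Ω_*)`. Feeding this into the error bound at `p` yields
`dist(p, Ω_*) ≤ c (2 ‖G‖ dist(p, Ω_*))^θ`, which is solved for `dist(p, Ω_*)`; finally
`dist(x, Ω_*) ≤ dist(p, Ω_*) + ‖G‖ / L`.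
-/

open Set Metric Filter Topology Real

theorem le_of_forall_le_add_mul {a b c : ℝ} (h : ∀ t ∈ Ioc (0 : ℝ) 1, a ≤ b + t * c) : a ≤ b := by
  have hlim : Tendsto (fun t : ℝ => b + t * c) (𝓝[>] 0) (𝓝 b) := by
    have : Continuous (fun t : ℝ => b + t * c) := by fun_prop
    simpa using (this.tendsto 0).mono_left nhdsWithin_le_nhds
  exact ge_of_tendsto hlim (eventually_of_mem (Ioc_mem_nhdsGT one_pos) h)

theorem le_rpow_of_le_mul_mul_rpow {D c a θ : ℝ} (hD : 0 ≤ D) (hc : 0 ≤ c) (ha : 0 ≤ a)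
    (hθ : θ < 1) (h : D ≤ c * (a * D) ^ θ) :
    D ≤ c ^ (1 / (1 - θ)) * a ^ (θ / (1 - θ)) := by
  rcases hD.eq_or_lt with rfl | hDpos
  · positivity
  have key : D ^ (1 - θ) ≤ c * a ^ θ := by
    refine le_of_mul_le_mul_right ?_ (rpow_pos_of_pos hDpos θ)
    rwa [← rpow_add hDpos, sub_add_cancel, rpow_one, mul_assoc, ← mul_rpow ha hD]
  calc D = (D ^ (1 - θ)) ^ (1 / (1 - θ)) := by
        rw [← rpow_mul hD, mul_one_div_cancel (sub_pos.2 hθ).ne', rpow_one]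
    _ ≤ (c * a ^ θ) ^ (1 / (1 - θ)) := by gcongr
    _ = c ^ (1 / (1 - θ)) * a ^ (θ / (1 - θ)) := by
        rw [mul_rpow hc (by positivity), ← rpow_mul ha, mul_one_div]

theorem Metric.le_mul_infDist_of_forall {α : Type*} [PseudoMetricSpace α] {s : Set α} {x : α}
    {a K : ℝ} (hs : s.Nonempty) (hK : 0 ≤ K) (h : ∀ y ∈ s, a ≤ K * dist x y) :
    a ≤ K * infDist x s := by
  rcases hK.eq_or_lt with rfl | hK
  · obtain ⟨y, hy⟩ := hs
    simpa using h y hy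
  rw [← div_le_iff₀' hK, le_infDist hs]
  exact fun y hy => (div_le_iff₀' hK).2 (h y hy)

variable {E : Type*} [NormedAddCommGroup E] [InnerProductSpace ℝ E]

theorem ConvexOn.add_inner_gradient_le [CompleteSpace E] {f : E → ℝ} {g x : E}
    (hf : ConvexOn ℝ univ f) (hgrad : HasGradientAt f g x) (y : E) :
    f x + inner ℝ g (y - x) ≤ f y := by
  have hline : ConvexOn ℝ univ (f ∘ AffineMap.lineMap (k := ℝ) x y) := hf.comp_affineMap _
  have hderiv : HasDerivAt (f ∘ AffineMap.lineMap (k := ℝ) x y) (inner ℝ g (y - x)) 0 := by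
    simpa using hgrad.hasFDerivAt.comp_hasDerivAt_of_eq (0 : ℝ) AffineMap.hasDerivAt_lineMap
      (by simp)
  have := hline.le_slope_of_hasDerivAt (mem_univ 0) (mem_univ 1) one_pos hderiv
  simp only [slope_def_field, Function.comp_apply, AffineMap.lineMap_apply_one,
    AffineMap.lineMap_apply_zero, sub_zero, div_one] at this
  linarith

theorem ConvexOn.mul_sub_le_inner_of_prox {g : E → ℝ} {η : ℝ} {v p : E} (hη : 0 ≤ η)
    (hg : ConvexOn ℝ univ g)
    (hp : ∀ z, 1 / 2 * ‖p - v‖ ^ 2 + η * g p ≤ 1 / 2 * ‖z - v‖ ^ 2 + η * g z) (z : E) :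
    η * (g p - g z) ≤ inner ℝ (v - p) (p - z) := by
  -- compare `p` with `p + t • (z - p)` and let `t → 0⁺`
  refine le_of_forall_le_add_mul (c := ‖z - p‖ ^ 2 / 2) fun t ⟨ht0, ht1⟩ => ?_
  have hconv : g (p + t • (z - p)) ≤ (1 - t) * g p + t * g z := by
    rw [show p + t • (z - p) = (1 - t) • p + t • z by module]
    exact hg.2 (mem_univ _) (mem_univ _) (by linarith) ht0.le (by ring)
  have hexpand : ‖p + t • (z - p) - v‖ ^ 2
      = ‖p - v‖ ^ 2 + 2 * t * inner ℝ (v - p) (p - z) + t ^ 2 * ‖z - p‖ ^ 2 := by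
    rw [show p + t • (z - p) - v = (p - v) + t • (z - p) by abel, norm_add_sq_real,
      inner_smul_right, norm_smul, mul_pow, Real.norm_eq_abs, sq_abs,
      ← inner_neg_neg, neg_sub, neg_sub]
    ring
  have hmin := hp (p + t • (z - p))
  rw [hexpand] at hmin
  have : t * (η * (g p - g z)) ≤ t * (inner ℝ (v - p) (p - z) + t * (‖z - p‖ ^ 2 / 2)) := by
    nlinarith [mul_le_mul_of_nonneg_left hconv hη]
  exact le_of_mul_le_mul_left this ht0

section ProxGrad

variable [CompleteSpace E] {f g : E → ℝ} {f' : E → E} {L : ℝ} {x p : E}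

theorem sub_le_inner_of_prox_grad (hL : 0 < L) (hf : ConvexOn ℝ univ f)
    (hfp : HasGradientAt f (f' p) p) (hg : ConvexOn ℝ univ g)
    (hp : ∀ z, 1 / 2 * ‖p - (x - (1 / L) • f' x)‖ ^ 2 + (1 / L) * g p
        ≤ 1 / 2 * ‖z - (x - (1 / L) • f' x)‖ ^ 2 + (1 / L) * g z) (z : E) :
    f p + g p - (f z + g z) ≤ inner ℝ (f' p - f' x + L • (x - p)) (p - z) := by
  have hfz : f p - f z ≤ inner ℝ (f' p) (p - z) := by
    have := hf.add_inner_gradient_le hfp z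
    rw [← neg_sub p z, inner_neg_right] at this
    linarith
  have hgz : g p - g z ≤ inner ℝ (L • (x - p) - f' x) (p - z) := by
    have := hg.mul_sub_le_inner_of_prox (by positivity) hp z
    rwa [show x - (1 / L) • f' x - p = (1 / L) • (L • (x - p) - f' x) by
        rw [smul_sub, smul_smul, one_div_mul_cancel hL.ne', one_smul]; abel,
      real_inner_smul_left, mul_le_mul_iff_of_pos_left (by positivity)] at this
  rw [show f' p - f' x + L • (x - p) = f' p + (L • (x - p) - f' x) by abel, inner_add_left]
  linarith

theorem prox_grad_le (hL : 0 < L) (hf : ConvexOn ℝ univ f)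
    (hfp : HasGradientAt f (f' p) p) (hg : ConvexOn ℝ univ g)
    (hp : ∀ z, 1 / 2 * ‖p - (x - (1 / L) • f' x)‖ ^ 2 + (1 / L) * g p
        ≤ 1 / 2 * ‖z - (x - (1 / L) • f' x)‖ ^ 2 + (1 / L) * g z)
    (hlip : ‖f' p - f' x‖ ≤ L * ‖p - x‖) :
    f p + g p ≤ f x + g x := by
  have hsub := sub_le_inner_of_prox_grad hL hf hfp hg hp x
  have hinner : inner ℝ (f' p - f' x + L • (x - p)) (p - x) ≤ 0 := by
    rw [inner_add_left, ← neg_sub p x, smul_neg, inner_neg_left, real_inner_smul_left,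
      real_inner_self_eq_norm_sq]
    nlinarith [real_inner_le_norm (f' p - f' x) (p - x), norm_nonneg (p - x)]
  linarith

theorem prox_grad_sub_le_mul_dist (hL : 0 < L) (hf : ConvexOn ℝ univ f)
    (hfp : HasGradientAt f (f' p) p) (hg : ConvexOn ℝ univ g)
    (hp : ∀ z, 1 / 2 * ‖p - (x - (1 / L) • f' x)‖ ^ 2 + (1 / L) * g p
        ≤ 1 / 2 * ‖z - (x - (1 / L) • f' x)‖ ^ 2 + (1 / L) * g z)
    (hlip : ‖f' p - f' x‖ ≤ L * ‖p - x‖) (z : E) :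
    f p + g p - (f z + g z) ≤ 2 * ‖L • (x - p)‖ * dist p z := by
  have hnorm : ‖f' p - f' x + L • (x - p)‖ ≤ 2 * ‖L • (x - p)‖ := by
    have hG : ‖L • (x - p)‖ = L * ‖p - x‖ := by
      rw [norm_smul, Real.norm_of_nonneg hL.le, norm_sub_rev]
    linarith [norm_add_le (f' p - f' x) (L • (x - p))]
  calc f p + g p - (f z + g z) ≤ inner ℝ (f' p - f' x + L • (x - p)) (p - z) :=
        sub_le_inner_of_prox_grad hL hf hfp hg hp z
    _ ≤ ‖f' p - f' x + L • (x - p)‖ * ‖p - z‖ := real_inner_le_norm _ _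
    _ ≤ 2 * ‖L • (x - p)‖ * dist p z := by
        rw [dist_eq_norm]
        gcongr

end ProxGrad

theorem heb_dist_prox_grad_bound_small_theta_general {d : ℕ} (L c θ ξ : ℝ)
    (hL : 0 < L) (hc : 0 < c) (hθ : θ ∈ Set.Ioc (0:ℝ) (1/2))
    (f g : EuclideanSpace ℝ (Fin d) → ℝ)
    (f' : EuclideanSpace ℝ (Fin d) → EuclideanSpace ℝ (Fin d))
    (hconvf : ConvexOn ℝ Set.univ f)
    (hgrad : ∀ x, HasGradientAt f (f' x) x)
    (hlip : ∀ x y, ‖f' x - f' y‖ ≤ L * ‖x - y‖)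
    (hconvg : ConvexOn ℝ Set.univ g)
    (T : EuclideanSpace ℝ (Fin d) → EuclideanSpace ℝ (Fin d))
    (hT : ∀ x z, 1 / 2 * ‖T x - (x - (1 / L) • f' x)‖ ^ 2 + (1 / L) * g (T x)
        ≤ 1 / 2 * ‖z - (x - (1 / L) • f' x)‖ ^ 2 + (1 / L) * g z)
    (Ω : Set (EuclideanSpace ℝ (Fin d)))
    (hΩ : Ω = {z | ∀ y, f z + g z ≤ f y + g y}) (hne : Ω.Nonempty)
    (Fstar : ℝ) (hfs : ∀ z ∈ Ω, f z + g z = Fstar)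
    (heb : ∀ x, f x + g x - Fstar ≤ ξ →
        Metric.infDist x Ω ≤ c * (f x + g x - Fstar) ^ θ)
    (x : EuclideanSpace ℝ (Fin d)) (hx : f x + g x - Fstar ≤ ξ) :
    Metric.infDist x Ω ≤ 2 / L * ‖L • (x - T x)‖
      + c ^ (1 / (1 - θ)) * (2:ℝ) ^ (θ / (1 - θ)) * ‖L • (x - T x)‖ ^ (θ / (1 - θ)) := by
  set p := T x
  set G := L • (x - p)
  have hFstar : ∀ y, Fstar ≤ f y + g y := by
    obtain ⟨z, hz⟩ := hne
    rw [← hfs z hz]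
    rw [hΩ] at hz
    exact hz
  have hpx : f p + g p ≤ f x + g x :=
    prox_grad_le hL hconvf (hgrad p) hconvg (hT x) (hlip p x)
  have hgap : f p + g p - Fstar ≤ 2 * ‖G‖ * infDist p Ω :=
    le_mul_infDist_of_forall hne (by positivity) fun z hz =>
      hfs z hz ▸ prox_grad_sub_le_mul_dist hL hconvf (hgrad p) hconvg (hT x) (hlip p x) z
  have hdist_p : infDist p Ω ≤ c ^ (1 / (1 - θ)) * (2 * ‖G‖) ^ (θ / (1 - θ)) := by
    refine le_rpow_of_le_mul_mul_rpow infDist_nonneg hc.le (by positivity) (by linarith [hθ.2]) ?_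
    calc infDist p Ω ≤ c * (f p + g p - Fstar) ^ θ := heb p (by linarith)
      _ ≤ c * (2 * ‖G‖ * infDist p Ω) ^ θ := by
          gcongr
          · linarith [hFstar p]
          · exact hθ.1.le
  have hdist_xp : dist x p ≤ 2 / L * ‖G‖ := by
    rw [dist_eq_norm, norm_smul, Real.norm_of_nonneg hL.le, div_mul_eq_mul_div,
      le_div_iff₀ hL]
    nlinarith [norm_nonneg (x - p)]
  calc infDist x Ω ≤ infDist p Ω + dist x p := infDist_le_infDist_add_dist
    _ ≤ _ := by
      rw [mul_rpow zero_le_two (norm_nonneg G), ← mul_assoc] at hdist_p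
      linarith

theorem heb_dist_prox_grad_bound_small_theta {d : ℕ} (L c θ ξ : ℝ)
    (hL : 0 < L) (hc : 0 < c) (hθ : θ ∈ Set.Ioc (0:ℝ) (1/2))
    (f g : EuclideanSpace ℝ (Fin d) → ℝ)
    (f' : EuclideanSpace ℝ (Fin d) → EuclideanSpace ℝ (Fin d))
    (hconvf : ConvexOn ℝ Set.univ f)
    (hgrad : ∀ x, HasGradientAt f (f' x) x)
    (hlip : ∀ x y, ‖f' x - f' y‖ ≤ L * ‖x - y‖)
    (hconvg : ConvexOn ℝ Set.univ g) (hlsc : LowerSemicontinuous g)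
    (T : EuclideanSpace ℝ (Fin d) → EuclideanSpace ℝ (Fin d))
    (hT : ∀ x z, 1 / 2 * ‖T x - (x - (1 / L) • f' x)‖ ^ 2 + (1 / L) * g (T x)
        ≤ 1 / 2 * ‖z - (x - (1 / L) • f' x)‖ ^ 2 + (1 / L) * g z)
    (Ω : Set (EuclideanSpace ℝ (Fin d)))
    (hΩ : Ω = {z | ∀ y, f z + g z ≤ f y + g y}) (hne : Ω.Nonempty)
    (Fstar : ℝ) (hfs : ∀ z ∈ Ω, f z + g z = Fstar)
    (heb : ∀ x, f x + g x - Fstar ≤ ξ →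
        Metric.infDist x Ω ≤ c * (f x + g x - Fstar) ^ θ)
    (x : EuclideanSpace ℝ (Fin d)) (hx : f x + g x - Fstar ≤ ξ) :
    Metric.infDist x Ω ≤ 2 / L * ‖L • (x - T x)‖
      + c ^ (1 / (1 - θ)) * (2:ℝ) ^ (θ / (1 - θ)) * ‖L • (x - T x)‖ ^ (θ / (1 - θ)) :=
  heb_dist_prox_grad_bound_small_theta_general L c θ ξ hL hc hθ f g f' hconvf hgrad hlip hconvg T hT
    Ω hΩ hne Fstar hfs heb x hx
end

section
/- Let F = f + g with f convex L-smooth and g proper convex lsc, nonempty optimal set Ω_*. Suppose F(x₀) − F_* ≤ ε₀ and HEB holds on S_{ε₀} with exponent θ ∈ (0,1] and constant c. Consider the restarted APG scheme: stage k runs t_k = ⌈2c√L ε_{k−1}^{θ−1/2}⌉ iterations of APG (with guarantee F(x_{T+1}) − F_* ≤ 2L·dist(x_init, Ω_*)²/(T+1)²) starting from x_{k−1}, producing x_k, where ε_k = ε₀/2^k. Then F(x_k) − F_* ≤ ε_k for all k. -/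
theorem restarted_apg_linear_convergence {d : ℕ} (L c θ ε₀ : ℝ)
    (hL : 0 < L) (hc : 0 < c) (hε₀ : 0 < ε₀) (hθ : θ ∈ Set.Ioc (0:ℝ) 1)
    (f g : EuclideanSpace ℝ (Fin d) → ℝ)
    (f' : EuclideanSpace ℝ (Fin d) → EuclideanSpace ℝ (Fin d))
    (hconvf : ConvexOn ℝ Set.univ f)
    (hgrad : ∀ x, HasGradientAt f (f' x) x)
    (hlip : ∀ x y, ‖f' x - f' y‖ ≤ L * ‖x - y‖)
    (hconvg : ConvexOn ℝ Set.univ g) (hlsc : LowerSemicontinuous g)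
    (Ω : Set (EuclideanSpace ℝ (Fin d)))
    (hΩ : Ω = {z | ∀ y, f z + g z ≤ f y + g y}) (hne : Ω.Nonempty)
    (Fstar : ℝ) (hfs : ∀ z ∈ Ω, f z + g z = Fstar)
    (heb : ∀ x, f x + g x - Fstar ≤ ε₀ →
        Metric.infDist x Ω ≤ c * (f x + g x - Fstar) ^ θ)
    (A : EuclideanSpace ℝ (Fin d) → ℕ → EuclideanSpace ℝ (Fin d))
    (hA : ∀ y T, f (A y T) + g (A y T) - Fstar
        ≤ 2 * L * (Metric.infDist y Ω) ^ 2 / ((T : ℝ) + 1) ^ 2)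
    (x : ℕ → EuclideanSpace ℝ (Fin d))
    (h0 : f (x 0) + g (x 0) - Fstar ≤ ε₀)
    (hstage : ∀ k : ℕ,
        x (k + 1) = A (x k) ⌈2 * c * Real.sqrt L * (ε₀ / 2 ^ k) ^ (θ - 1/2)⌉₊) :
    ∀ k : ℕ, f (x k) + g (x k) - Fstar ≤ ε₀ / 2 ^ k := by
  have hθ0 := hθ.1
  obtain ⟨z, hz⟩ := hne
  have hlow : ∀ y, Fstar ≤ f y + g y := by
    intro y
    rw [← hfs z hz]
    exact (hΩ ▸ hz) y
  intro k
  induction k with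
  | zero => simpa using h0
  | succ k ih =>
    have hx := hstage k
    set ε : ℝ := ε₀ / 2 ^ k with hεdef
    have hεpos : 0 < ε := by positivity
    have ha0 : 0 ≤ f (x k) + g (x k) - Fstar := by linarith [hlow (x k)]
    have hεε₀ : ε ≤ ε₀ := by
      rw [hεdef]
      exact div_le_self hε₀.le (one_le_pow₀ (by norm_num : (1:ℝ) ≤ 2))
    have hdist : Metric.infDist (x k) Ω ≤ c * ε ^ θ := by
      calc Metric.infDist (x k) Ω ≤ c * (f (x k) + g (x k) - Fstar) ^ θ :=
            heb (x k) (by linarith)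
        _ ≤ c * ε ^ θ := by
            exact mul_le_mul_of_nonneg_left (Real.rpow_le_rpow ha0 ih hθ0.le) hc.le

    have hdist0 : (0:ℝ) ≤ Metric.infDist (x k) Ω := Metric.infDist_nonneg
    set T : ℕ := ⌈2 * c * Real.sqrt L * ε ^ (θ - 1/2)⌉₊ with hTdef
    set M : ℝ := 2 * c * Real.sqrt L * ε ^ (θ - 1/2) with hMdef
    have hsL : 0 < Real.sqrt L := Real.sqrt_pos.mpr hL
    have hM : 0 < M := by positivity
    have hT : M ≤ (T : ℝ) + 1 := le_trans (Nat.le_ceil _) (by linarith)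
    have hbound : f (x (k+1)) + g (x (k+1)) - Fstar
        ≤ 2 * L * (Metric.infDist (x k) Ω) ^ 2 / ((T : ℝ) + 1) ^ 2 := by
      rw [hx]; exact hA (x k) T
    have hstep : 2 * L * (Metric.infDist (x k) Ω) ^ 2 / ((T : ℝ) + 1) ^ 2
        ≤ 2 * L * (c * ε ^ θ) ^ 2 / M ^ 2 := by
      apply div_le_div₀ (by positivity)
      · gcongr
      · positivity
      · gcongr
    have hrw1 : (ε ^ (θ - 1/2)) ^ 2 = ε ^ (2*θ - 1) := by
      rw [sq, ← Real.rpow_add hεpos]; ring_nf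
    have hrw2 : (ε ^ θ) ^ 2 = ε ^ (2*θ - 1) * ε := by
      rw [sq, ← Real.rpow_add hεpos, show θ + θ = (2*θ-1)+1 by ring,
        Real.rpow_add hεpos, Real.rpow_one]
    have hne2 : ε ^ (2*θ - 1) ≠ 0 := ne_of_gt (Real.rpow_pos_of_pos hεpos _)
    have heq : 2 * L * (c * ε ^ θ) ^ 2 / M ^ 2 = ε / 2 := by
      rw [hMdef]
      rw [mul_pow, mul_pow, mul_pow, hrw1, hrw2, Real.sq_sqrt hL.le]
      field_simp
    have hfin : ε / 2 = ε₀ / 2 ^ (k+1) := by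
      rw [hεdef, pow_succ]; ring
    linarith [hbound, hstep, heq ▸ hstep, hfin]
end

section
/- Let f : ℝ^d → ℝ be convex L-smooth with minimizer x_*, δ > 0, x₀ ∈ ℝ^d, f_δ(x) = f(x) + (δ/2)‖x − x₀‖². Suppose x_{t+1} satisfies f_δ(x_{t+1}) − f_δ(x) ≤ q^t (f(x₀) − f(x)) for all x where q = 1 − √(δ/(L+δ)), and additionally ‖x_{t+1} − x₀‖ ≤ √2‖x₀ − x_*‖. Then ‖∇f(x_{t+1})‖ ≤ √(L(L+δ)) · q^{t/2} · ‖x₀ − x_*‖ + √2 δ ‖x₀ − x_*‖. -/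
/-!
Write `g = ∇f(x) + δ (x - x₀)` for the gradient of the `(L + δ)`-smooth function `f_δ` at
`x = x_{t+1}`. A gradient step from `x` decreases `f_δ` by at least `‖g‖² / (2(L + δ))`, and by
hypothesis that decrease is at most `q^t (f(x₀) - f(x_*)) ≤ q^t (L/2) ‖x₀ - x_*‖²`. Then
`∇f(x) = g - δ (x - x₀)` and the bound on `‖x - x₀‖` give the claim.
-/

open scoped RealInnerProductSpace

section Smooth

variable {E : Type*} [NormedAddCommGroup E] [InnerProductSpace ℝ E] [CompleteSpace E]
  {h : E → ℝ} {h' : E → E} {M : ℝ}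

lemma hasDerivAt_comp_add_smul (hg : ∀ x, HasGradientAt h (h' x) x) (y v : E) (s : ℝ) :
    HasDerivAt (fun s : ℝ => h (y + s • v)) ⟪h' (y + s • v), v⟫ s := by
  have hline : HasDerivAt (fun s : ℝ => y + s • v) v s := by
    simpa using ((hasDerivAt_id s).smul_const v).const_add y
  exact (hasGradientAt_iff_hasFDerivAt.mp (hg _)).comp_hasDerivAt s hline

lemma le_add_inner_add_sq_of_lipschitz_gradient_s14 (hg : ∀ x, HasGradientAt h (h' x) x)
    (hl : ∀ x y, ‖h' x - h' y‖ ≤ M * ‖x - y‖) (y v : E) :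
    h (y + v) ≤ h y + ⟪h' y, v⟫ + M / 2 * ‖v‖ ^ 2 := by
  set ψ : ℝ → ℝ := fun s => h (y + s • v) - s * ⟪h' y, v⟫ - M / 2 * s ^ 2 * ‖v‖ ^ 2
  have hψ : ∀ s, HasDerivAt ψ (⟪h' (y + s • v) - h' y, v⟫ - M * s * ‖v‖ ^ 2) s := by
    intro s
    refine (((hasDerivAt_comp_add_smul hg y v s).sub ((hasDerivAt_id s).mul_const _)).sub
      (((hasDerivAt_pow 2 s).const_mul (M / 2)).mul_const (‖v‖ ^ 2))).congr_deriv ?_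
    simp only [inner_sub_left, one_mul, Nat.cast_ofNat]
    ring
  have hψ_nonpos : ∀ s, 0 ≤ s → ⟪h' (y + s • v) - h' y, v⟫ - M * s * ‖v‖ ^ 2 ≤ 0 := by
    intro s hs
    have hlip : ‖h' (y + s • v) - h' y‖ ≤ M * (s * ‖v‖) := by
      simpa [norm_smul, abs_of_nonneg hs] using hl (y + s • v) y
    nlinarith [real_inner_le_norm (h' (y + s • v) - h' y) v,
      mul_le_mul_of_nonneg_right hlip (norm_nonneg v)]
  have hanti : AntitoneOn ψ (Set.Icc 0 1) :=
    antitoneOn_of_hasDerivWithinAt_nonpos (convex_Icc 0 1)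
      (HasDerivAt.continuousOn fun s _ => hψ s) (fun s _ => (hψ s).hasDerivWithinAt)
      (fun s hs => hψ_nonpos s (interior_subset hs).1)
  have := hanti (Set.left_mem_Icc.mpr zero_le_one) (Set.right_mem_Icc.mpr zero_le_one)
    zero_le_one
  simp only [ψ, zero_smul, add_zero, one_smul] at this
  linarith

lemma sq_norm_gradient_le_sub_gradient_step (hg : ∀ x, HasGradientAt h (h' x) x)
    (hl : ∀ x y, ‖h' x - h' y‖ ≤ M * ‖x - y‖) (hM : 0 < M) (y : E) :
    ‖h' y‖ ^ 2 / (2 * M) ≤ h y - h (y - M⁻¹ • h' y) := by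
  have := le_add_inner_add_sq_of_lipschitz_gradient_s14 hg hl y (-(M⁻¹ • h' y))
  rw [inner_neg_right, real_inner_smul_right, real_inner_self_eq_norm_sq, norm_neg, norm_smul,
    Real.norm_eq_abs, abs_inv, abs_of_pos hM, ← sub_eq_add_neg] at this
  have hquad : M⁻¹ * ‖h' y‖ ^ 2 - M / 2 * (M⁻¹ * ‖h' y‖) ^ 2 = ‖h' y‖ ^ 2 / (2 * M) := by
    field_simp
    ring
  linarith

lemma sub_le_of_lipschitz_gradient_of_forall_le (hg : ∀ x, HasGradientAt h (h' x) x)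
    (hl : ∀ x y, ‖h' x - h' y‖ ≤ M * ‖x - y‖) {xmin : E} (hmin : ∀ y, h xmin ≤ h y) (x : E) :
    h x - h xmin ≤ M / 2 * ‖x - xmin‖ ^ 2 := by
  have hzero : h' xmin = 0 := by
    have := IsLocalMin.hasFDerivAt_eq_zero (Filter.Eventually.of_forall hmin)
      (hasGradientAt_iff_hasFDerivAt.mp (hg xmin))
    exact (InnerProductSpace.toDual ℝ E).map_eq_zero_iff.mp this
  have := le_add_inner_add_sq_of_lipschitz_gradient_s14 hg hl xmin (x - xmin)
  rw [hzero, inner_zero_left, add_sub_cancel] at this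
  linarith

end Smooth

section Regularization

variable {E : Type*} [NormedAddCommGroup E] [InnerProductSpace ℝ E] {f : E → ℝ} {f' : E → E}

lemma hasGradientAt_add_half_mul_norm_sub_sq [CompleteSpace E] {x : E}
    (hf : HasGradientAt f (f' x) x) (δ : ℝ) (x0 : E) :
    HasGradientAt (fun y => f y + δ / 2 * ‖y - x0‖ ^ 2) (f' x + δ • (x - x0)) x := by
  rw [hasGradientAt_iff_hasFDerivAt] at hf ⊢
  refine (hf.add ((((hasFDerivAt_id x).sub_const x0).norm_sq).const_mul (δ / 2))).congr_fderiv ?_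
  ext v
  simp [← mul_assoc]

lemma norm_add_smul_sub_sub_le {L δ : ℝ} (hf : ∀ x y, ‖f' x - f' y‖ ≤ L * ‖x - y‖) (hδ : 0 ≤ δ)
    (x0 x y : E) :
    ‖(f' x + δ • (x - x0)) - (f' y + δ • (y - x0))‖ ≤ (L + δ) * ‖x - y‖ := by
  calc ‖(f' x + δ • (x - x0)) - (f' y + δ • (y - x0))‖
      = ‖(f' x - f' y) + δ • (x - y)‖ := by congr 1; module
    _ ≤ ‖f' x - f' y‖ + δ * ‖x - y‖ := by
        grw [norm_add_le, norm_smul, Real.norm_eq_abs, abs_of_nonneg hδ]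
    _ ≤ (L + δ) * ‖x - y‖ := by linarith [hf x y]

end Regularization

lemma Real.le_sqrt_mul_rpow_half_mul {a b q r : ℝ} (ha : 0 ≤ a) (hq : 0 ≤ q) (hr : 0 ≤ r)
    {t : ℕ} (h : b ^ 2 ≤ a * q ^ t * r ^ 2) : b ≤ √a * q ^ ((t : ℝ) / 2) * r := by
  have hsqrt : √(q ^ t) = q ^ ((t : ℝ) / 2) := by
    rw [Real.sqrt_eq_rpow, ← Real.rpow_natCast, ← Real.rpow_mul hq, mul_one_div]
  calc b ≤ |b| := le_abs_self b
    _ ≤ √(a * q ^ t * r ^ 2) := Real.abs_le_sqrt h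
    _ = √a * q ^ ((t : ℝ) / 2) * r := by
        rw [Real.sqrt_mul (by positivity), Real.sqrt_mul ha, hsqrt, Real.sqrt_sq hr]

theorem regularized_stage_grad_norm_bound_general {d : ℕ} (L δ : ℝ) (hL : 0 < L) (hδ : 0 < δ)
    (f : EuclideanSpace ℝ (Fin d) → ℝ)
    (f' : EuclideanSpace ℝ (Fin d) → EuclideanSpace ℝ (Fin d))
    (hgrad : ∀ x, HasGradientAt f (f' x) x)
    (hlip : ∀ x y, ‖f' x - f' y‖ ≤ L * ‖x - y‖)
    (xstar : EuclideanSpace ℝ (Fin d)) (hstar : ∀ y, f xstar ≤ f y)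
    (x0 xt1 : EuclideanSpace ℝ (Fin d)) (t : ℕ)
    (hyp : ∀ x, (f xt1 + δ / 2 * ‖xt1 - x0‖ ^ 2) - (f x + δ / 2 * ‖x - x0‖ ^ 2)
        ≤ (1 - Real.sqrt (δ / (L + δ))) ^ t * (f x0 - f x))
    (hclose : ‖xt1 - x0‖ ≤ Real.sqrt 2 * ‖x0 - xstar‖) :
    ‖f' xt1‖ ≤ Real.sqrt (L * (L + δ))
        * (1 - Real.sqrt (δ / (L + δ))) ^ ((t : ℝ) / 2) * ‖x0 - xstar‖
      + Real.sqrt 2 * δ * ‖x0 - xstar‖ := by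
  set q := 1 - Real.sqrt (δ / (L + δ))
  have hq : 0 ≤ q := sub_nonneg.mpr <| Real.sqrt_le_one.mpr <| (div_le_one (by positivity)).mpr
    (by linarith)
  set g := f' xt1 + δ • (xt1 - x0)
  set z := xt1 - (L + δ)⁻¹ • g
  have hstep : ‖g‖ ^ 2 / (2 * (L + δ)) ≤ q ^ t * (L / 2 * ‖x0 - xstar‖ ^ 2) :=
    calc ‖g‖ ^ 2 / (2 * (L + δ))
        ≤ (f xt1 + δ / 2 * ‖xt1 - x0‖ ^ 2) - (f z + δ / 2 * ‖z - x0‖ ^ 2) :=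
          sq_norm_gradient_le_sub_gradient_step
            (fun x => hasGradientAt_add_half_mul_norm_sub_sq (hgrad x) δ x0)
            (norm_add_smul_sub_sub_le hlip hδ.le x0) (by positivity) xt1
      _ ≤ q ^ t * (f x0 - f z) := hyp z
      _ ≤ q ^ t * (L / 2 * ‖x0 - xstar‖ ^ 2) := by
          gcongr
          linarith [hstar z, sub_le_of_lipschitz_gradient_of_forall_le hgrad hlip hstar x0]
  have hg : ‖g‖ ≤ √(L * (L + δ)) * q ^ ((t : ℝ) / 2) * ‖x0 - xstar‖ := by
    refine Real.le_sqrt_mul_rpow_half_mul (by positivity) hq (norm_nonneg _) ?_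
    rw [div_le_iff₀ (by positivity)] at hstep
    linarith
  calc ‖f' xt1‖ = ‖g - δ • (xt1 - x0)‖ := by rw [add_sub_cancel_right]
    _ ≤ ‖g‖ + δ * ‖xt1 - x0‖ := by
        grw [norm_sub_le, norm_smul, Real.norm_eq_abs, abs_of_pos hδ]
    _ ≤ _ := by linarith [mul_le_mul_of_nonneg_left hclose hδ.le]

theorem regularized_stage_grad_norm_bound {d : ℕ} (L δ : ℝ) (hL : 0 < L) (hδ : 0 < δ)
    (f : EuclideanSpace ℝ (Fin d) → ℝ)
    (f' : EuclideanSpace ℝ (Fin d) → EuclideanSpace ℝ (Fin d))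
    (hconv : ConvexOn ℝ Set.univ f)
    (hgrad : ∀ x, HasGradientAt f (f' x) x)
    (hlip : ∀ x y, ‖f' x - f' y‖ ≤ L * ‖x - y‖)
    (xstar : EuclideanSpace ℝ (Fin d)) (hstar : ∀ y, f xstar ≤ f y)
    (x0 xt1 : EuclideanSpace ℝ (Fin d)) (t : ℕ)
    (hyp : ∀ x, (f xt1 + δ / 2 * ‖xt1 - x0‖ ^ 2) - (f x + δ / 2 * ‖x - x0‖ ^ 2)
        ≤ (1 - Real.sqrt (δ / (L + δ))) ^ t * (f x0 - f x))
    (hclose : ‖xt1 - x0‖ ≤ Real.sqrt 2 * ‖x0 - xstar‖) :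
    ‖f' xt1‖ ≤ Real.sqrt (L * (L + δ))
        * (1 - Real.sqrt (δ / (L + δ))) ^ ((t : ℝ) / 2) * ‖x0 - xstar‖
      + Real.sqrt 2 * δ * ‖x0 - xstar‖ :=
  regularized_stage_grad_norm_bound_general L δ hL hδ f f' hgrad hlip xstar hstar x0 xt1 t hyp
    hclose
end

section
/- Let F = f + g with f convex L-smooth and g proper convex lsc, and for η > 0 let G_η(x) = (x − prox_{ηg}(x − η∇f(x)))/η be the proximal gradient mapping. Then for fixed x, the map η ↦ ‖G_η(x)‖ is monotonically non-increasing in η; in particular ‖G_{1/L}(x)‖ ≤ ‖G_η(x)‖ whenever η ≤ 1/L. -/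
open RealInnerProductSpace

lemma prox_var_ineq {E : Type*} [NormedAddCommGroup E] [InnerProductSpace ℝ E]
    (g : E → ℝ) (hconvg : ConvexOn ℝ Set.univ g) (η : ℝ) (hη : 0 < η)
    (u p : E) (hp : ∀ z, 1/2*‖p-u‖^2+η*g p ≤ 1/2*‖z-u‖^2+η*g z) (z : E) :
    ⟪u - p, z - p⟫ ≤ η * (g z - g p) := by
  have key : ∀ t : ℝ, 0 < t → t ≤ 1 →
      ⟪u - p, z - p⟫ ≤ t/2*‖z-p‖^2 + η*(g z - g p) := by
    intro t ht ht1
    have hy := hp ((1-t)•p + t•z)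
    have hconv := hconvg.2 (Set.mem_univ p) (Set.mem_univ z) (by linarith : (0:ℝ) ≤ 1-t)
      ht.le (by ring)
    simp only [smul_eq_mul] at hconv
    have heq : (1-t)•p + t•z - u = (p - u) + t•(z - p) := by
      rw [smul_sub, sub_smul, one_smul]; abel
    have hnorm : ‖(1-t)•p + t•z - u‖^2
        = ‖p-u‖^2 + 2*(t*⟪p-u, z-p⟫) + ‖t•(z-p)‖^2 := by
      rw [heq, @norm_add_sq_real, real_inner_smul_right]
    have hns : ‖t•(z-p)‖^2 = t^2 * ‖z-p‖^2 := by
      rw [norm_smul, mul_pow, Real.norm_eq_abs, sq_abs]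
    have hinner : ⟪p - u, z - p⟫ = - ⟪u - p, z - p⟫ := by
      rw [← inner_neg_left, neg_sub]
    have h2 : η * g ((1-t)•p + t•z) ≤ η * ((1-t)*g p + t*g z) :=
      mul_le_mul_of_nonneg_left hconv hη.le
    rw [hnorm, hns, hinner] at hy
    have h3 : t * ⟪u - p, z - p⟫ ≤ t*(t/2*‖z-p‖^2 + η*(g z - g p)) := by nlinarith
    exact le_of_mul_le_mul_left h3 ht
  by_cases hz : z = p
  · simp [hz]
  · apply le_of_forall_pos_le_add
    intro ε hε
    have hzp0 : z - p ≠ 0 := sub_ne_zero.mpr hz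
    have hzp : 0 < ‖z - p‖^2 := pow_pos (norm_pos_iff.mpr hzp0) 2
    set t := min 1 (2*ε/‖z-p‖^2) with hts
    have ht : 0 < t := lt_min one_pos (by positivity)
    have hk := key t ht (min_le_left _ _)
    have h6 : t ≤ 2*ε/‖z-p‖^2 := min_le_right _ _
    have h7 : t * ‖z-p‖^2 ≤ 2*ε := by
      have := mul_le_mul_of_nonneg_right h6 hzp.le
      rwa [div_mul_cancel₀ _ hzp.ne'] at this
    nlinarith

set_option maxHeartbeats 1000000 in
theorem prox_grad_norm_antitone {d : ℕ} (L : ℝ) (hL : 0 < L)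
    (f g : EuclideanSpace ℝ (Fin d) → ℝ)
    (f' : EuclideanSpace ℝ (Fin d) → EuclideanSpace ℝ (Fin d))
    (hconvf : ConvexOn ℝ Set.univ f)
    (hgrad : ∀ x, HasGradientAt f (f' x) x)
    (hlip : ∀ x y, ‖f' x - f' y‖ ≤ L * ‖x - y‖)
    (hconvg : ConvexOn ℝ Set.univ g) (hlsc : LowerSemicontinuous g)
    (x : EuclideanSpace ℝ (Fin d)) (p : ℝ → EuclideanSpace ℝ (Fin d))
    (hp : ∀ η > (0:ℝ), ∀ z, 1 / 2 * ‖p η - (x - η • f' x)‖ ^ 2 + η * g (p η)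
        ≤ 1 / 2 * ‖z - (x - η • f' x)‖ ^ 2 + η * g z)
    (η₁ η₂ : ℝ) (h1 : 0 < η₁) (h12 : η₁ ≤ η₂) :
    ‖(1 / η₂) • (x - p η₂)‖ ≤ ‖(1 / η₁) • (x - p η₁)‖ := by
  have h2 : 0 < η₂ := h1.trans_le h12
  have A := prox_var_ineq g hconvg η₁ h1 (x - η₁ • f' x) (p η₁) (hp η₁ h1) (p η₂)
  have B := prox_var_ineq g hconvg η₂ h2 (x - η₂ • f' x) (p η₂) (hp η₂ h2) (p η₁)
  set v₁ := x - p η₁ with hv1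
  set v₂ := x - p η₂ with hv2
  have e1 : (x - η₁ • f' x) - p η₁ = v₁ - η₁ • f' x := by rw [hv1]; abel
  have e2 : p η₂ - p η₁ = v₁ - v₂ := by rw [hv1, hv2]; abel
  have e3 : (x - η₂ • f' x) - p η₂ = v₂ - η₂ • f' x := by rw [hv2]; abel
  have e4 : p η₁ - p η₂ = v₂ - v₁ := by rw [hv1, hv2]; abel
  rw [e1, e2] at A
  rw [e3, e4] at B
  have exp1 : ⟪v₁ - η₁ • f' x, v₁ - v₂⟫
      = ‖v₁‖^2 - ⟪v₁,v₂⟫ - η₁*⟪f' x,v₁⟫ + η₁*⟪f' x,v₂⟫ := by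
    simp only [inner_sub_left, inner_sub_right, real_inner_smul_left,
      real_inner_self_eq_norm_sq]
    ring
  have exp2 : ⟪v₂ - η₂ • f' x, v₂ - v₁⟫
      = ‖v₂‖^2 - ⟪v₁,v₂⟫ - η₂*⟪f' x,v₂⟫ + η₂*⟪f' x,v₁⟫ := by
    simp only [inner_sub_left, inner_sub_right, real_inner_smul_left,
      real_inner_self_eq_norm_sq, real_inner_comm v₂ v₁]
    ring
  rw [exp1] at A
  rw [exp2] at B
  have C : η₂*‖v₁‖^2 + η₁*‖v₂‖^2 ≤ (η₁+η₂)*⟪v₁,v₂⟫ := by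
    nlinarith [mul_le_mul_of_nonneg_left A h2.le, mul_le_mul_of_nonneg_left B h1.le]
  have cs : ⟪v₁,v₂⟫ ≤ ‖v₁‖ * ‖v₂‖ := real_inner_le_norm v₁ v₂
  have prod_le : (η₂*‖v₁‖ - η₁*‖v₂‖)*(‖v₁‖-‖v₂‖) ≤ 0 := by
    have h3 := mul_le_mul_of_nonneg_left cs (by positivity : (0:ℝ) ≤ η₁+η₂)
    nlinarith [C]
  have ha : 0 ≤ ‖v₁‖ := norm_nonneg _
  have hb : 0 ≤ ‖v₂‖ := norm_nonneg _
  have main : η₁*‖v₂‖ ≤ η₂*‖v₁‖ := by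
    by_contra h
    push_neg at h
    have hlt : ‖v₁‖ < ‖v₂‖ := by nlinarith
    nlinarith
  rw [norm_smul, norm_smul, Real.norm_eq_abs, Real.norm_eq_abs,
    abs_of_pos (by positivity : (0:ℝ) < 1/η₁), abs_of_pos (by positivity : (0:ℝ) < 1/η₂)]
  rw [div_mul_eq_mul_div, div_mul_eq_mul_div, one_mul, one_mul,
    div_le_div_iff₀ h2 h1]
  linarith
end
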